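/- For every d ≥ 1 and every decreasing probability distribution r on [d²] (i.e., r : Fin (d²) → ℝ with r₁ ≥ r₂ ≥ … ≥ r_{d²} ≥ 0 and ∑ᵢ rᵢ = 1), there exists a positive semidefinite matrix ρ ∈ M_{d²}(ℂ), with rows and columns indexed by Fin d × Fin d, having trace 1, whose eigenvalues listed in decreasing order are exactly r₁, …, r_{d²}, and whose two partial traces satisfy tr_B(ρ) = (1/d)·I_d and tr_A(ρ) = (1/d)·I_d. -/

import Mathlib

open ComplexOrder

/-- Partial trace over the second (B) tensor factor. -/
noncomputable def ptraceB {n m : ℕ} (ρ : Matrix (Fin n × Fin m) (Fin n × Fin m) ℂ) :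
    Matrix (Fin n) (Fin n) ℂ :=
  fun i k => ∑ j : Fin m, ρ (i, j) (k, j)

/-- Partial trace over the first (A) tensor factor. -/
noncomputable def ptraceA {n m : ℕ} (ρ : Matrix (Fin n × Fin m) (Fin n × Fin m) ℂ) :
    Matrix (Fin m) (Fin m) ℂ :=
  fun j l => ∑ i : Fin n, ρ (i, j) (i, l)

/-!
The generalized Bell states `Φ_{a,b} = d^{-1/2} ∑ᵢ ζ^{ib} |i⟩|i + a⟩`, with `ζ` a primitive
`d`-th root of unity, form an orthonormal basis of `ℂ^d ⊗ ℂ^d` (orthogonality of the characters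
of `ℤ/d`), and each of them has both marginals equal to `I/d`. Hence
`ρ = ∑ r_{a,b} |Φ_{a,b}⟩⟨Φ_{a,b}|` is unitarily conjugate to `diag r`, so its spectrum is `r`,
and by linearity of the partial traces both of its marginals are `I/d`.
-/

open Matrix

lemma exists_perm_comp_eq_of_map_univ_eq {α β : Type*} [Fintype α] [DecidableEq β] {f g : α → β}
    (h : Finset.univ.val.map f = Finset.univ.val.map g) : ∃ σ : Equiv.Perm α, f ∘ σ = g := by
  classical
  have hfiber (c : β) : Fintype.card {a // g a = c} = Fintype.card {a // f a = c} := by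
    have := congrArg (Multiset.count c) h.symm
    simp only [Multiset.count_map, eq_comm (a := c)] at this
    simpa only [Fintype.card_subtype, Finset.card_def, Finset.filter_val] using this
  exact ⟨Equiv.ofFiberEquiv fun c => Fintype.equivOfCardEq (hfiber c),
    funext (Equiv.ofFiberEquiv_map _)⟩

lemma Matrix.IsHermitian.exists_perm_eigenvalues_eq {𝕜 n : Type*} [RCLike 𝕜] [Fintype n]
    [DecidableEq n] {U : Matrix n n 𝕜} (hU : Uᴴ * U = 1) (v : n → ℝ)
    (hH : (U * diagonal (fun i => (v i : 𝕜)) * Uᴴ).IsHermitian) :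
    ∃ σ : Equiv.Perm n, hH.eigenvalues ∘ σ = v := by
  have hcharpoly : (U * diagonal (fun i => (v i : 𝕜)) * Uᴴ).charpoly
      = (diagonal (fun i => (v i : 𝕜))).charpoly := by
    rw [charpoly_mul_comm, ← mul_assoc, hU, one_mul]
  have hroots : Finset.univ.val.map (RCLike.ofReal ∘ hH.eigenvalues)
      = Finset.univ.val.map (RCLike.ofReal ∘ v : n → 𝕜) := by
    rw [← hH.roots_charpoly_eq_eigenvalues, hcharpoly, charpoly_diagonal, Polynomial.roots_prod]
    · simp
    · simp [Finset.prod_ne_zero_iff, Polynomial.X_sub_C_ne_zero]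
  refine exists_perm_comp_eq_of_map_univ_eq
    (Multiset.map_injective (RCLike.ofReal_injective (K := 𝕜)) ?_)
  simpa only [Multiset.map_map] using hroots

lemma Matrix.mul_diagonal_mul_conjTranspose_eq_sum {m n R : Type*} [Fintype n] [DecidableEq n]
    [CommSemiring R] [StarRing R] (U : Matrix m n R) (v : n → R) :
    U * diagonal v * Uᴴ = ∑ t, v t • vecMulVec (Uᵀ t) (star (Uᵀ t)) := by
  ext p q
  rw [mul_apply, Matrix.sum_apply]
  refine Finset.sum_congr rfl fun t _ => ?_
  simp only [mul_diagonal, conjTranspose_apply, Matrix.smul_apply, vecMulVec_apply,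
    transpose_apply, Pi.star_apply, smul_eq_mul]
  ring

section PartialTrace

variable {n m : ℕ} {ι : Type*} [Fintype ι]

lemma ptraceB_sum_smul (c : ι → ℂ) (ρ : ι → Matrix (Fin n × Fin m) (Fin n × Fin m) ℂ) :
    ptraceB (∑ t, c t • ρ t) = ∑ t, c t • ptraceB (ρ t) := by
  ext i k
  simp only [ptraceB, Matrix.sum_apply, Matrix.smul_apply, smul_eq_mul, Finset.mul_sum]
  exact Finset.sum_comm

lemma ptraceA_sum_smul (c : ι → ℂ) (ρ : ι → Matrix (Fin n × Fin m) (Fin n × Fin m) ℂ) :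
    ptraceA (∑ t, c t • ρ t) = ∑ t, c t • ptraceA (ρ t) := by
  ext j l
  simp only [ptraceA, Matrix.sum_apply, Matrix.smul_apply, smul_eq_mul, Finset.mul_sum]
  exact Finset.sum_comm

end PartialTrace

lemma IsPrimitiveRoot.sum_inv_pow_mul_pow_eq_ite {K : Type*} [Field K] {ζ : K} {d : ℕ}
    (hζ : IsPrimitiveRoot ζ d) (b b' : Fin d) :
    ∑ i : Fin d, (ζ ^ ((i : ℕ) * b))⁻¹ * ζ ^ ((i : ℕ) * b') = if b = b' then (d : K) else 0 := by
  have hd : d ≠ 0 := b.pos.ne'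
  set x := (ζ ^ (b : ℕ))⁻¹ * ζ ^ (b' : ℕ) with hx
  have hterm (i : ℕ) : (ζ ^ (i * b))⁻¹ * ζ ^ (i * b') = x ^ i := by
    rw [mul_pow, inv_pow, ← pow_mul, ← pow_mul, mul_comm i, mul_comm i]
  simp_rw [hterm]
  rw [Fin.sum_univ_eq_sum_range (x ^ ·) d]
  split_ifs with hb
  · simp [hx, hb, hζ.ne_zero hd]
  · have hx1 : x ≠ 1 := fun h => hb <| Fin.ext <| hζ.pow_inj b.2 b'.2 <| by
      rwa [hx, inv_mul_eq_one₀ (pow_ne_zero _ (hζ.ne_zero hd))] at h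
    have hxd : x ^ d = 1 := by
      rw [hx, mul_pow, inv_pow, ← pow_mul, ← pow_mul, pow_mul', pow_mul' ζ, hζ.pow_eq_one]
      simp
    rw [geom_sum_eq hx1, hxd, sub_self, zero_div]

lemma IsPrimitiveRoot.conj_eq_inv {ζ : ℂ} {d : ℕ} [NeZero d] (hζ : IsPrimitiveRoot ζ d) :
    starRingEnd ℂ ζ = ζ⁻¹ :=
  (Complex.inv_eq_conj (hζ.norm'_eq_one (NeZero.ne d))).symm

section Bell

variable {d : ℕ} [NeZero d] {ζ : ℂ}

noncomputable def bellAmp (d : ℕ) (ζ : ℂ) (k : ℕ) : ℂ := (Real.sqrt d : ℂ)⁻¹ * ζ ^ k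

lemma conj_bellAmp_mul_bellAmp (hζ : IsPrimitiveRoot ζ d) (k l : ℕ) :
    starRingEnd ℂ (bellAmp d ζ k) * bellAmp d ζ l = (d : ℂ)⁻¹ * ((ζ ^ k)⁻¹ * ζ ^ l) := by
  have hsqrt : ((Real.sqrt d : ℂ))⁻¹ * (Real.sqrt d : ℂ)⁻¹ = (d : ℂ)⁻¹ := by
    rw [← mul_inv, ← Complex.ofReal_mul, Real.mul_self_sqrt d.cast_nonneg, Complex.ofReal_natCast]
  simp only [bellAmp, map_mul, map_pow, map_inv₀, Complex.conj_ofReal, hζ.conj_eq_inv, ← hsqrt]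
  ring

lemma bellAmp_mul_conj_bellAmp (hζ : IsPrimitiveRoot ζ d) (k : ℕ) :
    bellAmp d ζ k * starRingEnd ℂ (bellAmp d ζ k) = (d : ℂ)⁻¹ := by
  rw [mul_comm, conj_bellAmp_mul_bellAmp hζ,
    inv_mul_cancel₀ (pow_ne_zero _ (hζ.ne_zero (NeZero.ne d))), mul_one]

/-- Column `(a, b)` is the Bell state `Φ_{a,b}`. -/
noncomputable def bellMatrix (d : ℕ) (ζ : ℂ) : Matrix (Fin d × Fin d) (Fin d × Fin d) ℂ :=
  of fun p t => if p.2 = p.1 + t.1 then bellAmp d ζ (p.1 * t.2) else 0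

lemma bellMatrix_conjTranspose_mul_self (hζ : IsPrimitiveRoot ζ d) :
    (bellMatrix d ζ)ᴴ * bellMatrix d ζ = 1 := by
  ext ⟨a, b⟩ ⟨a', b'⟩
  simp only [bellMatrix, mul_apply, conjTranspose_apply, of_apply, apply_ite star, RCLike.star_def,
    star_zero, mul_ite, ite_mul, conj_bellAmp_mul_bellAmp hζ, zero_mul, mul_zero,
    Fintype.sum_prod_type, Finset.sum_ite_eq', Finset.mem_univ, ↓reduceIte, add_right_inj,
    Finset.sum_ite_irrel, Finset.sum_const_zero]
  rw [← Finset.mul_sum, hζ.sum_inv_pow_mul_pow_eq_ite, one_apply]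
  have hd : (d : ℂ) ≠ 0 := Nat.cast_ne_zero.mpr (NeZero.ne d)
  rcases eq_or_ne a a' with rfl | ha
  · by_cases hb : b = b' <;> simp [hb, hd]
  · simp [ha, ha.symm]

lemma ptraceB_bellMatrix_col (hζ : IsPrimitiveRoot ζ d) (t : Fin d × Fin d) :
    ptraceB (vecMulVec ((bellMatrix d ζ)ᵀ t) (star ((bellMatrix d ζ)ᵀ t))) = (1 / (d : ℂ)) • 1 := by
  ext i k
  simp only [ptraceB, bellMatrix, vecMulVec_apply, transpose_apply, of_apply, Pi.star_apply,
    apply_ite star, RCLike.star_def, star_zero, mul_ite, ite_mul, zero_mul, mul_zero,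
    Finset.sum_ite_eq', Finset.mem_univ, ↓reduceIte, add_left_inj, one_div, Matrix.smul_apply,
    smul_eq_mul]
  rcases eq_or_ne k i with rfl | hki
  · simp [bellAmp_mul_conj_bellAmp hζ]
  · simp [hki, one_apply_ne' hki]

lemma ptraceA_bellMatrix_col (hζ : IsPrimitiveRoot ζ d) (t : Fin d × Fin d) :
    ptraceA (vecMulVec ((bellMatrix d ζ)ᵀ t) (star ((bellMatrix d ζ)ᵀ t))) = (1 / (d : ℂ)) • 1 := by
  ext j l
  simp only [ptraceA, bellMatrix, vecMulVec_apply, transpose_apply, of_apply, Pi.star_apply,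
    apply_ite star, RCLike.star_def, star_zero, mul_ite, ite_mul, bellAmp_mul_conj_bellAmp hζ,
    zero_mul, mul_zero, one_div, Matrix.smul_apply, smul_eq_mul]
  rcases eq_or_ne j l with rfl | hjl
  · have hsolve (i : Fin d) : j = i + t.1 ↔ j - t.1 = i := by rw [sub_eq_iff_eq_add, eq_comm]
    simp [hsolve]
  · have hterm (i : Fin d) :
        (if l = i + t.1 then if j = i + t.1 then (d : ℂ)⁻¹ else 0 else 0) = 0 := by
      grind
    simp [hterm, one_apply_ne hjl]

end Bell

theorem stmt0_general (d : ℕ) (hd : 1 ≤ d) (r : Fin (d ^ 2) → ℝ)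
    (hr_nonneg : ∀ i, 0 ≤ r i) (hr_sum : ∑ i, r i = 1) :
    ∃ ρ : Matrix (Fin d × Fin d) (Fin d × Fin d) ℂ,
      ρ.PosSemidef ∧ ρ.trace = 1 ∧
      (∃ hH : ρ.IsHermitian, ∃ σ : Equiv.Perm (Fin d × Fin d),
        ∀ p : Fin d × Fin d,
          hH.eigenvalues (σ p) = r (finCongr (pow_two d).symm (finProdFinEquiv p))) ∧
      ptraceB ρ = (1 / (d : ℂ)) • 1 ∧ ptraceA ρ = (1 / (d : ℂ)) • 1 := by
  have : NeZero d := ⟨by omega⟩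
  obtain ⟨ζ, hζ⟩ : ∃ ζ : ℂ, IsPrimitiveRoot ζ d :=
    ⟨_, Complex.isPrimitiveRoot_exp d (NeZero.ne d)⟩
  set v : Fin d × Fin d → ℝ := fun p => r (finCongr (pow_two d).symm (finProdFinEquiv p))
  have hv_sum : ∑ t, (v t : ℂ) = 1 := by
    rw [← Complex.ofReal_sum, ← Complex.ofReal_one, ← hr_sum]
    exact congrArg _ ((finProdFinEquiv.trans (finCongr (pow_two d).symm)).sum_comp r)
  have hU := bellMatrix_conjTranspose_mul_self hζ
  set ρ := bellMatrix d ζ * diagonal (fun t => (v t : ℂ)) * (bellMatrix d ζ)ᴴ with hρ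
  have hρ_psd : ρ.PosSemidef :=
    PosSemidef.mul_mul_conjTranspose_same
      (posSemidef_diagonal_iff.mpr fun t => Complex.zero_le_real.mpr (hr_nonneg _)) _
  have hρ_sum :
      ρ = ∑ t, (v t : ℂ) • vecMulVec ((bellMatrix d ζ)ᵀ t) (star ((bellMatrix d ζ)ᵀ t)) :=
    mul_diagonal_mul_conjTranspose_eq_sum _ _
  refine ⟨ρ, hρ_psd, ?_, ⟨hρ_psd.isHermitian, ?_⟩, ?_, ?_⟩
  · rw [hρ, trace_mul_cycle, hU, one_mul, trace_diagonal, hv_sum]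
  · obtain ⟨σ, hσ⟩ := hρ_psd.isHermitian.exists_perm_eigenvalues_eq hU v
    exact ⟨σ, congrFun hσ⟩
  · rw [hρ_sum, ptraceB_sum_smul]
    simp_rw [ptraceB_bellMatrix_col hζ, ← Finset.sum_smul, hv_sum, one_smul]
  · rw [hρ_sum, ptraceA_sum_smul]
    simp_rw [ptraceA_bellMatrix_col hζ, ← Finset.sum_smul, hv_sum, one_smul]

theorem stmt0 (d : ℕ) (hd : 1 ≤ d) (r : Fin (d ^ 2) → ℝ)
    (hr_dec : Antitone r) (hr_nonneg : ∀ i, 0 ≤ r i) (hr_sum : ∑ i, r i = 1) :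
    ∃ ρ : Matrix (Fin d × Fin d) (Fin d × Fin d) ℂ,
      ρ.PosSemidef ∧ ρ.trace = 1 ∧
      (∃ hH : ρ.IsHermitian, ∃ σ : Equiv.Perm (Fin d × Fin d),
        ∀ p : Fin d × Fin d,
          hH.eigenvalues (σ p) = r (finCongr (pow_two d).symm (finProdFinEquiv p))) ∧
      ptraceB ρ = (1 / (d : ℂ)) • 1 ∧ ptraceA ρ = (1 / (d : ℂ)) • 1 :=
  stmt0_general d hd r hr_nonneg hr_sum
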